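/- arXiv:1310.4787 — 6 statements merged into one kernel-verified Lean document; each statement's English description precedes it below -/
import Mathlib

section
/- For every natural number m ≥ 2 and every perfect matching M₂ of a 2m-element set S, the number of perfect matchings M₁ of S with M₁ ∩ M₂ = ∅ (no common pair) is at least (1/2)·(2m-1)!!. -/
/-- A perfect matching of (the elements of) a finite type. -/
def IsPerfectMatching {α : Type*} [DecidableEq α] (M : Finset (Finset α)) : Prop :=
  (∀ b ∈ M, b.card = 2) ∧ ∀ x : α, ∃! b, b ∈ M ∧ x ∈ b

open Finset

attribute [local instance] Classical.propDecidable

section Aux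

variable {α : Type*} [DecidableEq α]

/-- A perfect matching of the finite set `S`. -/
def PMof (S : Finset α) (M : Finset (Finset α)) : Prop :=
  (∀ b ∈ M, b.card = 2 ∧ b ⊆ S) ∧ ∀ x ∈ S, ∃! b, b ∈ M ∧ x ∈ b

lemma pair_left (a b : α) : a ∈ ({a, b} : Finset α) := Finset.mem_insert_self a {b}

lemma pair_right (a b : α) : b ∈ ({a, b} : Finset α) :=
  Finset.mem_insert_of_mem (Finset.mem_singleton_self b)

lemma mem_pair' {a b c : α} : a ∈ ({b, c} : Finset α) ↔ a = b ∨ a = c := by simp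

lemma PMof.block_eq {S : Finset α} {M : Finset (Finset α)} (h : PMof S M)
    {b c : Finset α} (hb : b ∈ M) (hc : c ∈ M) {x : α} (hxb : x ∈ b) (hxc : x ∈ c) :
    b = c := by
  have hxS : x ∈ S := (h.1 b hb).2 hxb
  obtain ⟨d, _, hd⟩ := h.2 x hxS
  rw [hd b ⟨hb, hxb⟩, hd c ⟨hc, hxc⟩]

lemma PMof.partner {S : Finset α} {M : Finset (Finset α)} (h : PMof S M)
    {x : α} (hx : x ∈ S) :
    ∃ y, y ≠ x ∧ y ∈ S ∧ ({x, y} : Finset α) ∈ M ∧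
      ∀ b ∈ M, x ∈ b → b = {x, y} := by
  obtain ⟨b, ⟨hbM, hxb⟩, _⟩ := h.2 x hx
  have hb2 : b.card = 2 := (h.1 b hbM).1
  rw [Finset.card_eq_two] at hb2
  obtain ⟨a, c, hac, rfl⟩ := hb2
  have hxac : x = a ∨ x = c := by simpa using hxb
  have key : ∀ y, y ≠ x → ({a, c} : Finset α) = {x, y} →
      (∃ y, y ≠ x ∧ y ∈ S ∧ ({x, y} : Finset α) ∈ M ∧
        ∀ b ∈ M, x ∈ b → b = {x, y}) := by
    intro y hy he
    refine ⟨y, hy, ?_, he ▸ hbM, ?_⟩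
    · exact (h.1 _ hbM).2 (he ▸ (by simp : y ∈ ({x, y} : Finset α)))
    · intro d hd hxd
      rw [← he]
      exact h.block_eq hd hbM hxd hxb
  rcases hxac with rfl | rfl
  · exact key c (fun e => hac e.symm) rfl
  · exact key a hac (Finset.pair_comm a x)

lemma PMof.erase_block {S : Finset α} {M : Finset (Finset α)} (h : PMof S M)
    {b : Finset α} (hb : b ∈ M) : PMof (S \ b) (M.erase b) := by
  constructor
  · intro c hc
    have hcM := Finset.mem_of_mem_erase hc
    refine ⟨(h.1 c hcM).1, fun z hz => Finset.mem_sdiff.2 ⟨(h.1 c hcM).2 hz, fun hzb => ?_⟩⟩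
    exact (Finset.ne_of_mem_erase hc) (h.block_eq hcM hb hz hzb)
  · intro x hxS
    rw [Finset.mem_sdiff] at hxS
    obtain ⟨hxSS, hxb⟩ := hxS
    obtain ⟨c, ⟨hcM, hxc⟩, hun⟩ := h.2 x hxSS
    have hcb : c ≠ b := fun e => hxb (e ▸ hxc)
    exact ⟨c, ⟨Finset.mem_erase.2 ⟨hcb, hcM⟩, hxc⟩,
      fun d hd => hun d ⟨Finset.mem_of_mem_erase hd.1, hd.2⟩⟩

lemma PMof.insert_block {S : Finset α} {M : Finset (Finset α)} (h : PMof S M)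
    {b : Finset α} (hb2 : b.card = 2) (hd : Disjoint b S) :
    PMof (b ∪ S) (insert b M) := by
  have hbM : ∀ c ∈ M, ∀ z ∈ c, z ∉ b := fun c hc z hz hzb =>
    Finset.disjoint_left.1 hd hzb ((h.1 c hc).2 hz)
  constructor
  · intro c hc
    rcases Finset.mem_insert.1 hc with rfl | hcM
    · exact ⟨hb2, Finset.subset_union_left⟩
    · exact ⟨(h.1 c hcM).1, (h.1 c hcM).2.trans Finset.subset_union_right⟩
  · intro x hx
    rcases Finset.mem_union.1 hx with hxb | hxS
    · refine ⟨b, ⟨Finset.mem_insert_self _ _, hxb⟩, ?_⟩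
      rintro c ⟨hcM, hxc⟩
      rcases Finset.mem_insert.1 hcM with rfl | hcM
      · rfl
      · exact absurd hxb (hbM c hcM x hxc)
    · obtain ⟨c, ⟨hcM, hxc⟩, hun⟩ := h.2 x hxS
      refine ⟨c, ⟨Finset.mem_insert_of_mem hcM, hxc⟩, ?_⟩
      rintro d ⟨hdM, hxd⟩
      rcases Finset.mem_insert.1 hdM with rfl | hdM
      · exact absurd hxS (Finset.disjoint_left.1 hd hxd)
      · exact hun d ⟨hdM, hxd⟩

/-- The set of perfect matchings of `S` avoiding all blocks of `N`. -/
noncomputable def avoidSet (S : Finset α) (N : Finset (Finset α)) :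
    Finset (Finset (Finset α)) :=
  S.powerset.powerset.filter fun M => PMof S M ∧ M ∩ N = ∅

lemma mem_avoidSet {S : Finset α} {N M : Finset (Finset α)} :
    M ∈ avoidSet S N ↔ PMof S M ∧ M ∩ N = ∅ := by
  constructor
  · intro h
    exact (Finset.mem_filter.1 h).2
  · intro h
    refine Finset.mem_filter.2 ⟨?_, h⟩
    rw [Finset.mem_powerset]
    intro b hb
    exact Finset.mem_powerset.2 (h.1.1 b hb).2

lemma notMem_of_avoid {M N : Finset (Finset α)} (h : M ∩ N = ∅)
    {b : Finset α} (hb : b ∈ M) : b ∉ N := fun hbN =>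
  Finset.eq_empty_iff_forall_notMem.1 h b (Finset.mem_inter.2 ⟨hb, hbN⟩)

lemma card_filter_mem {S : Finset α} {N : Finset (Finset α)} {b : Finset α}
    (hb2 : b.card = 2) (hbS : b ⊆ S) (hbN : b ∉ N) :
    ((avoidSet S N).filter fun M => b ∈ M).card = (avoidSet (S \ b) N).card := by
  have hbne : b.Nonempty := Finset.card_pos.1 (by omega)
  refine Finset.card_bij' (fun M _ => M.erase b) (fun M _ => insert b M) ?hi ?hj ?li ?ri
  case hi =>
    intro M hM
    obtain ⟨hMa, hbM⟩ := Finset.mem_filter.1 hM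
    obtain ⟨hPM, hdisj⟩ := mem_avoidSet.1 hMa
    refine mem_avoidSet.2 ⟨hPM.erase_block hbM, ?_⟩
    rw [Finset.eq_empty_iff_forall_notMem]
    intro c hc
    rw [Finset.mem_inter] at hc
    exact notMem_of_avoid hdisj (Finset.mem_of_mem_erase hc.1) hc.2
  case hj =>
    intro M hM
    obtain ⟨hPM, hdisj⟩ := mem_avoidSet.1 hM
    have hd : Disjoint b (S \ b) := disjoint_sdiff_self_right
    have hPM' := hPM.insert_block hb2 hd
    rw [Finset.union_sdiff_of_subset hbS] at hPM'
    refine Finset.mem_filter.2 ⟨mem_avoidSet.2 ⟨hPM', ?_⟩, Finset.mem_insert_self _ _⟩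
    rw [Finset.eq_empty_iff_forall_notMem]
    intro c hc
    rw [Finset.mem_inter] at hc
    rcases Finset.mem_insert.1 hc.1 with rfl | hcM
    · exact hbN hc.2
    · exact notMem_of_avoid hdisj hcM hc.2
  case li =>
    intro M hM
    exact Finset.insert_erase (Finset.mem_filter.1 hM).2
  case ri =>
    intro M hM
    obtain ⟨hPM, _⟩ := mem_avoidSet.1 hM
    have hbM : b ∉ M := fun hb => by
      obtain ⟨z, hz⟩ := hbne
      exact (Finset.mem_sdiff.1 ((hPM.1 b hb).2 hz)).2 hz
    exact Finset.erase_insert hbM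

lemma card_avoid_split (S : Finset α) (N : Finset (Finset α)) (b : Finset α) :
    (avoidSet S N).card =
      ((avoidSet S N).filter fun M => b ∈ M).card + (avoidSet S (insert b N)).card := by
  have he : avoidSet S (insert b N) = (avoidSet S N).filter fun M => b ∉ M := by
    ext M
    simp only [Finset.mem_filter, mem_avoidSet]
    constructor
    · rintro ⟨hPM, hd⟩
      refine ⟨⟨hPM, ?_⟩, fun hbM =>
        notMem_of_avoid hd hbM (Finset.mem_insert_self _ _)⟩
      rw [Finset.eq_empty_iff_forall_notMem]
      intro c hc
      rw [Finset.mem_inter] at hc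
      exact notMem_of_avoid hd hc.1 (Finset.mem_insert_of_mem hc.2)
    · rintro ⟨⟨hPM, hd⟩, hbM⟩
      refine ⟨hPM, ?_⟩
      rw [Finset.eq_empty_iff_forall_notMem]
      intro c hc
      rw [Finset.mem_inter, Finset.mem_insert] at hc
      rcases hc.2 with rfl | hcN
      · exact hbM hc.1
      · exact notMem_of_avoid hd hc.1 hcN
  rw [he, Finset.card_filter_add_card_filter_not]

lemma avoid_congr {S : Finset α} {N N' : Finset (Finset α)}
    (h1 : N' ⊆ N) (h2 : ∀ c ∈ N, c ⊆ S → c ∈ N') :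
    avoidSet S N = avoidSet S N' := by
  ext M
  simp only [mem_avoidSet]
  constructor
  · rintro ⟨hPM, hd⟩
    refine ⟨hPM, ?_⟩
    rw [Finset.eq_empty_iff_forall_notMem]
    intro c hc
    rw [Finset.mem_inter] at hc
    exact notMem_of_avoid hd hc.1 (h1 hc.2)
  · rintro ⟨hPM, hd⟩
    refine ⟨hPM, ?_⟩
    rw [Finset.eq_empty_iff_forall_notMem]
    intro c hc
    rw [Finset.mem_inter] at hc
    exact notMem_of_avoid hd hc.1 (h2 c hc.2 ((hPM.1 c hc.1).2))

/-- `D n` : the number of perfect matchings of a `2n`-set avoiding a fixed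
perfect matching. -/
def Dm : ℕ → ℕ
  | 0 => 1
  | 1 => 0
  | (n + 2) => (2 * n + 2) * (Dm (n + 1) + Dm n)

lemma count_avoid : ∀ (n : ℕ) (S : Finset α) (M₂ : Finset (Finset α)),
    PMof S M₂ → S.card = 2 * n → (avoidSet S M₂).card = Dm n := by
  intro n
  induction n using Nat.strong_induction_on with
  | _ n IH =>
  obtain _ | _ | k := n
  · -- n = 0
    intro S M₂ _ hcard
    have hS : S = ∅ := Finset.card_eq_zero.1 (by omega)
    subst hS
    have : avoidSet (∅ : Finset α) M₂ = {∅} := by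
      ext M
      simp only [mem_avoidSet, Finset.mem_singleton]
      constructor
      · rintro ⟨hPM, _⟩
        rw [Finset.eq_empty_iff_forall_notMem]
        intro b hb
        have h1 := (hPM.1 b hb).1
        have h2 := (hPM.1 b hb).2
        rw [Finset.subset_empty] at h2
        subst h2
        simp at h1
      · rintro rfl
        refine ⟨⟨fun b hb => absurd hb (Finset.notMem_empty b),
          fun x hx => absurd hx (Finset.notMem_empty x)⟩, by simp⟩
    rw [this]
    rfl
  · -- n = 1
    intro S M₂ h₂ hcard
    have : avoidSet S M₂ = ∅ := by
      rw [Finset.eq_empty_iff_forall_notMem]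
      intro M hM
      obtain ⟨hPM, hd⟩ := mem_avoidSet.1 hM
      obtain ⟨x, hx⟩ := Finset.card_pos.1 (show 0 < S.card by omega)
      obtain ⟨y, hyx, hyS, hxyM, _⟩ := hPM.partner hx
      obtain ⟨y₂, hy₂x, hy₂S, hxy₂M, _⟩ := h₂.partner hx
      have hsub : ({x, y} : Finset α) ⊆ S :=
        Finset.insert_subset hx (Finset.singleton_subset_iff.2 hyS)
      have hSxy : S = {x, y} := by
        apply (Finset.eq_of_subset_of_card_le hsub ?_).symm
        rw [Finset.card_pair (fun e => hyx e.symm)]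
        omega
      have hy₂mem : y₂ ∈ ({x, y} : Finset α) := hSxy ▸ hy₂S
      have : y₂ = y := by
        rcases Finset.mem_insert.1 hy₂mem with h | h
        · exact absurd h hy₂x
        · exact Finset.mem_singleton.1 h
      subst this
      exact notMem_of_avoid hd hxyM hxy₂M
    rw [this]
    rfl
  · -- n = k + 2
    intro S M₂ h₂ hcard
    obtain ⟨x, hx⟩ := Finset.card_pos.1 (show 0 < S.card by omega)
    obtain ⟨x', hx'x, hx'S, hxx'M, hxblock⟩ := h₂.partner hx
    have hxx'sub : ({x, x'} : Finset α) ⊆ S :=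
      Finset.insert_subset hx (Finset.singleton_subset_iff.2 hx'S)
    have hxx'card : ({x, x'} : Finset α).card = 2 :=
      Finset.card_pair (fun e => hx'x e.symm)
    -- each fiber has cardinality Dm (k+1) + Dm k
    have hfiber : ∀ y ∈ S \ {x, x'},
        ((avoidSet S M₂).filter fun M => ({x, y} : Finset α) ∈ M).card
          = Dm (k + 1) + Dm k := by
      intro y hy
      rw [Finset.mem_sdiff, Finset.mem_insert, Finset.mem_singleton] at hy
      obtain ⟨hyS, hyne⟩ := hy
      push_neg at hyne
      obtain ⟨hyx, hyx'⟩ := hyne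
      obtain ⟨y', hy'y, hy'S, hyy'M, hyblock⟩ := h₂.partner hyS
      -- distinctness facts
      have hy'x : y' ≠ x := by
        intro h
        have hyy'M2 : ({y, x} : Finset α) ∈ M₂ := h ▸ hyy'M
        have hblk : ({y, x} : Finset α) = {x, x'} := hxblock _ hyy'M2 (pair_right y x)
        have hym : y ∈ ({x, x'} : Finset α) := hblk ▸ pair_left y x
        rcases mem_pair'.1 hym with h | h
        · exact hyx h
        · exact hyx' h
      have hy'x' : y' ≠ x' := by
        intro h
        have hyy'M2 : ({y, x'} : Finset α) ∈ M₂ := h ▸ hyy'M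
        have heq : ({y, x'} : Finset α) = {x, x'} :=
          h₂.block_eq hyy'M2 hxx'M (pair_right y x') (pair_right x x')
        have hym : y ∈ ({x, x'} : Finset α) := heq ▸ pair_left y x'
        rcases mem_pair'.1 hym with h | h
        · exact hyx h
        · exact hyx' h
      have hxyM₂ : ({x, y} : Finset α) ∉ M₂ := by
        intro hm
        have hblk : ({x, y} : Finset α) = {x, x'} := hxblock _ hm (pair_left x y)
        have hym : y ∈ ({x, x'} : Finset α) := hblk ▸ pair_right x y
        rcases mem_pair'.1 hym with h | h
        · exact hyx h
        · exact hyx' h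
      have hx'y'M₂ : ({x', y'} : Finset α) ∉ M₂ := by
        intro hm
        have heq : ({x', y'} : Finset α) = {x, x'} :=
          h₂.block_eq hm hxx'M (pair_left x' y') (pair_right x x')
        have hxm : x ∈ ({x', y'} : Finset α) := heq.symm ▸ pair_left x x'
        rcases mem_pair'.1 hxm with h | h
        · exact hx'x h.symm
        · exact hy'x h.symm
      -- sets
      have hxysub : ({x, y} : Finset α) ⊆ S :=
        Finset.insert_subset hx (Finset.singleton_subset_iff.2 hyS)
      have hxycard : ({x, y} : Finset α).card = 2 :=
        Finset.card_pair (fun e => hyx e.symm)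
      have hx'mem2 : x' ∈ S \ {x, y} := by
        rw [Finset.mem_sdiff, Finset.mem_insert, Finset.mem_singleton]
        exact ⟨hx'S, by rintro (h | h); exacts [hx'x h, hyx' h.symm]⟩
      have hy'mem2 : y' ∈ S \ {x, y} := by
        rw [Finset.mem_sdiff, Finset.mem_insert, Finset.mem_singleton]
        exact ⟨hy'S, by rintro (h | h); exacts [hy'x h, hy'y h]⟩
      have hx'y'sub : ({x', y'} : Finset α) ⊆ S \ {x, y} :=
        Finset.insert_subset hx'mem2 (Finset.singleton_subset_iff.2 hy'mem2)
      have hx'y'card : ({x', y'} : Finset α).card = 2 :=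
        Finset.card_pair (fun e => hy'x' e.symm)
      have hcard2 : (S \ {x, y}).card = 2 * (k + 1) := by
        rw [Finset.card_sdiff_of_subset hxysub, hxycard]
        omega
      have hcard4 : ((S \ {x, y}) \ {x', y'}).card = 2 * k := by
        rw [Finset.card_sdiff_of_subset hx'y'sub, hx'y'card, hcard2]
        omega
      -- matchings of the small sets
      have hyy'mem : ({y, y'} : Finset α) ∈ M₂.erase {x, x'} := by
        refine Finset.mem_erase.2 ⟨?_, hyy'M⟩
        intro he
        have hym : y ∈ ({x, x'} : Finset α) := he ▸ pair_left y y'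
        rcases mem_pair'.1 hym with h | h
        · exact hyx h
        · exact hyx' h
      have hPM4' : PMof ((S \ {x, x'}) \ {y, y'}) ((M₂.erase {x, x'}).erase {y, y'}) :=
        (h₂.erase_block hxx'M).erase_block hyy'mem
      have hseteq : (S \ {x, x'}) \ {y, y'} = (S \ {x, y}) \ {x', y'} := by
        ext z
        simp only [Finset.mem_sdiff, Finset.mem_insert, Finset.mem_singleton]
        tauto
      rw [hseteq] at hPM4'
      have hPM2' : PMof (S \ {x, y})
          (insert {x', y'} ((M₂.erase {x, x'}).erase {y, y'})) := by
        have := hPM4'.insert_block hx'y'card disjoint_sdiff_self_right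
        rwa [Finset.union_sdiff_of_subset hx'y'sub] at this
      -- now compute
      have step1 : ((avoidSet S M₂).filter fun M => ({x, y} : Finset α) ∈ M).card
          = (avoidSet (S \ {x, y}) M₂).card :=
        card_filter_mem hxycard hxysub hxyM₂
      have step2 : (avoidSet (S \ {x, y}) M₂).card =
          ((avoidSet (S \ {x, y}) M₂).filter fun M => ({x', y'} : Finset α) ∈ M).card
            + (avoidSet (S \ {x, y}) (insert {x', y'} M₂)).card :=
        card_avoid_split _ _ _
      have hsub4 : ((M₂.erase {x, x'}).erase {y, y'}) ⊆ M₂ :=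
        (Finset.erase_subset _ _).trans (Finset.erase_subset _ _)
      have hnotsub : ∀ c ∈ M₂, c ⊆ (S \ {x, y}) \ {x', y'} →
          c ∈ (M₂.erase {x, x'}).erase {y, y'} := by
        intro c hc hcsub
        refine Finset.mem_erase.2 ⟨?_, Finset.mem_erase.2 ⟨?_, hc⟩⟩
        · rintro rfl
          have := hcsub (by simp : y ∈ ({y, y'} : Finset α))
          rw [Finset.mem_sdiff, Finset.mem_sdiff] at this
          exact this.1.2 (by simp)
        · rintro rfl
          have := hcsub (by simp : x ∈ ({x, x'} : Finset α))
          rw [Finset.mem_sdiff, Finset.mem_sdiff] at this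
          exact this.1.2 (by simp)
      have step3 : ((avoidSet (S \ {x, y}) M₂).filter
            fun M => ({x', y'} : Finset α) ∈ M).card = Dm k := by
        rw [card_filter_mem hx'y'card hx'y'sub hx'y'M₂,
          avoid_congr hsub4 hnotsub]
        exact IH k (by omega) _ _ hPM4' hcard4
      have step4 : (avoidSet (S \ {x, y}) (insert {x', y'} M₂)).card = Dm (k + 1) := by
        have h1' : insert {x', y'} ((M₂.erase {x, x'}).erase {y, y'}) ⊆
            insert {x', y'} M₂ := Finset.insert_subset_insert _ hsub4
        have h2' : ∀ c ∈ insert ({x', y'} : Finset α) M₂, c ⊆ S \ {x, y} →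
            c ∈ insert {x', y'} ((M₂.erase {x, x'}).erase {y, y'}) := by
          intro c hc hcsub
          rcases Finset.mem_insert.1 hc with rfl | hcM
          · exact Finset.mem_insert_self _ _
          refine Finset.mem_insert_of_mem (Finset.mem_erase.2 ⟨?_, Finset.mem_erase.2 ⟨?_, hcM⟩⟩)
          · rintro rfl
            have := hcsub (by simp : y ∈ ({y, y'} : Finset α))
            rw [Finset.mem_sdiff] at this
            exact this.2 (by simp)
          · rintro rfl
            have := hcsub (by simp : x ∈ ({x, x'} : Finset α))
            rw [Finset.mem_sdiff] at this
            exact this.2 (by simp)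
        rw [avoid_congr h1' h2']
        exact IH (k + 1) (by omega) _ _ hPM2' hcard2
      rw [step1, step2, step3, step4]
      omega
    -- decompose avoidSet by the partner of x
    have hdecomp : avoidSet S M₂ = (S \ {x, x'}).biUnion
        (fun y => (avoidSet S M₂).filter fun M => ({x, y} : Finset α) ∈ M) := by
      ext M
      rw [Finset.mem_biUnion]
      constructor
      · intro hM
        obtain ⟨hPM, hd⟩ := mem_avoidSet.1 hM
        obtain ⟨z, hzx, hzS, hxzM, _⟩ := hPM.partner hx
        refine ⟨z, ?_, Finset.mem_filter.2 ⟨hM, hxzM⟩⟩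
        rw [Finset.mem_sdiff, Finset.mem_insert, Finset.mem_singleton]
        refine ⟨hzS, ?_⟩
        rintro (h | h)
        · exact hzx h
        · subst h
          exact notMem_of_avoid hd hxzM hxx'M
      · rintro ⟨y, _, hMf⟩
        exact (Finset.mem_filter.1 hMf).1
    have hdisj : ∀ y₁ ∈ S \ {x, x'}, ∀ y₂ ∈ S \ {x, x'}, y₁ ≠ y₂ →
        Disjoint ((avoidSet S M₂).filter fun M => ({x, y₁} : Finset α) ∈ M)
          ((avoidSet S M₂).filter fun M => ({x, y₂} : Finset α) ∈ M) := by
      intro y₁ hy₁ y₂ hy₂ hne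
      rw [Finset.disjoint_left]
      intro M hM₁ hM₂
      obtain ⟨hMa, hb₁⟩ := Finset.mem_filter.1 hM₁
      obtain ⟨_, hb₂⟩ := Finset.mem_filter.1 hM₂
      obtain ⟨hPM, _⟩ := mem_avoidSet.1 hMa
      have heq : ({x, y₁} : Finset α) = {x, y₂} :=
        hPM.block_eq hb₁ hb₂ (pair_left x y₁) (pair_left x y₂)
      have hy₁m : y₁ ∈ ({x, y₂} : Finset α) := heq ▸ pair_right x y₁
      rw [Finset.mem_sdiff, Finset.mem_insert, Finset.mem_singleton] at hy₁
      rcases mem_pair'.1 hy₁m with h | h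
      · exact hy₁.2 (Or.inl h)
      · exact hne h
    rw [hdecomp, Finset.card_biUnion hdisj]
    rw [Finset.sum_congr rfl hfiber, Finset.sum_const, smul_eq_mul]
    rw [Finset.card_sdiff_of_subset hxx'sub, hxx'card, hcard]
    have hD : Dm (k + 2) = (2 * k + 2) * (Dm (k + 1) + Dm k) := rfl
    have h22 : 2 * (k + 2) - 2 = 2 * k + 2 := by omega
    rw [h22, hD]

lemma doubling : ∀ n : ℕ,
    (∏ i ∈ Finset.range (n + 2), (2 * i + 1)) ≤ 2 * Dm (n + 2) := by
  have key : ∀ n : ℕ,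
      (∏ i ∈ Finset.range (n + 2), (2 * i + 1)) ≤ 2 * Dm (n + 2) ∧
      (∏ i ∈ Finset.range (n + 3), (2 * i + 1)) ≤ 2 * Dm (n + 3) := by
    intro n
    induction n with
    | zero =>
      have h2 : Dm 2 = 2 := rfl
      have h3 : Dm 3 = 8 := rfl
      constructor
      · rw [h2]
        simp [Finset.prod_range_succ]
      · rw [h3]
        simp [Finset.prod_range_succ]
    | succ n ih =>
      refine ⟨ih.2, ?_⟩
      have h1 := ih.1
      have h2 := ih.2
      have hD : Dm (n + 4) = (2 * (n + 2) + 2) * (Dm (n + 3) + Dm (n + 2)) := rfl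
      have hT : (∏ i ∈ Finset.range (n + 4), (2 * i + 1)) =
          (∏ i ∈ Finset.range (n + 3), (2 * i + 1)) * (2 * (n + 3) + 1) :=
        Finset.prod_range_succ _ _
      have hT2 : (∏ i ∈ Finset.range (n + 3), (2 * i + 1)) =
          (∏ i ∈ Finset.range (n + 2), (2 * i + 1)) * (2 * (n + 2) + 1) :=
        Finset.prod_range_succ _ _
      rw [hD, hT]
      nlinarith [h1, h2, hT2]
  exact fun n => (key n).1

end Aux

/-- For `m ≥ 2` and any fixed perfect matching `M₂` of a `2m`-element set, the number of
perfect matchings `M₁` sharing no pair with `M₂` is at least half of `(2m-1)!!`,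
the total number of perfect matchings. -/
theorem matchings_avoiding_matching (m : ℕ) (hm : 2 ≤ m)
    (M₂ : Finset (Finset (Fin (2 * m)))) (h₂ : IsPerfectMatching M₂) :
    ∏ i ∈ Finset.range m, (2 * i + 1) ≤
      2 * Set.ncard {M₁ : Finset (Finset (Fin (2 * m))) |
        IsPerfectMatching M₁ ∧ M₁ ∩ M₂ = ∅} := by
  have hPM : PMof (Finset.univ : Finset (Fin (2 * m))) M₂ :=
    ⟨fun b hb => ⟨h₂.1 b hb, Finset.subset_univ b⟩, fun x _ => h₂.2 x⟩
  have hset : {M₁ : Finset (Finset (Fin (2 * m))) |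
      IsPerfectMatching M₁ ∧ M₁ ∩ M₂ = ∅} = ↑(avoidSet Finset.univ M₂) := by
    ext M
    simp only [Set.mem_setOf_eq, Finset.mem_coe, mem_avoidSet]
    constructor
    · rintro ⟨h1, hd⟩
      exact ⟨⟨fun b hb => ⟨h1.1 b hb, Finset.subset_univ b⟩, fun x _ => h1.2 x⟩, hd⟩
    · rintro ⟨h1, hd⟩
      exact ⟨⟨fun b hb => (h1.1 b hb).1, fun x => h1.2 x (Finset.mem_univ x)⟩, hd⟩
  rw [hset, Set.ncard_coe_finset]
  rw [count_avoid m Finset.univ M₂ hPM (by simp)]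
  obtain ⟨k, rfl⟩ : ∃ k, m = k + 2 := ⟨m - 2, by omega⟩
  exact doubling k
end

section
/- Fix a real y with 1 ≤ y ≤ 3, and for each integer d ≥ 2 set q_d = y·(log d)/d and λ_d = q_d·(1 - (1-q_d)^{d-1}) / (1-q_d)^d. Then lim_{d→∞} λ_d / (d^{y-1}·y·log d) = 1. -/
/-!
With `q = y log d / d` one has `log (1 - q) = -q + O(q²)` and `d q² → 0`, so
`(1 - q)^d ~ exp (-d q) = d^(-y)`. As `y > 0` this forces `(1 - q)^(d-1) → 0`, and the ratio in
question is exactly `(1 - (1 - q)^(d-1)) / (d^y (1 - q)^d)`, whose limit is `1 / 1`.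
-/

open Filter Real Topology

theorem tendsto_mul_log_pow_div_natCast (c : ℝ) (k : ℕ) :
    Tendsto (fun d : ℕ => c * log d ^ k / d) atTop (𝓝 0) := by
  have := ((tendsto_pow_log_div_mul_add_atTop 1 0 k one_ne_zero).comp
    tendsto_natCast_atTop_atTop).const_mul c
  simpa [Function.comp_def, mul_div_assoc] using this

theorem tendsto_of_tendsto_natCast_mul_sq {q : ℕ → ℝ}
    (h : Tendsto (fun n : ℕ => n * q n ^ 2) atTop (𝓝 0)) : Tendsto q atTop (𝓝 0) := by
  have hsq : Tendsto (fun n => q n ^ 2) atTop (𝓝 0) := by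
    refine squeeze_zero' (Eventually.of_forall fun n => sq_nonneg (q n)) ?_ h
    filter_upwards [eventually_ge_atTop 1] with n hn
    exact le_mul_of_one_le_left (sq_nonneg _) (by exact_mod_cast hn)
  refine (tendsto_zero_iff_abs_tendsto_zero q).2 ?_
  simpa [Function.comp_def, sqrt_sq_eq_abs] using hsq.sqrt

theorem abs_log_one_sub_add_le {x : ℝ} (hx : |x| ≤ 1 / 2) : |log (1 - x) + x| ≤ 2 * x ^ 2 := by
  have h := abs_log_sub_add_sum_range_le (x := x) (by linarith) 1
  simp only [Finset.sum_range_one, zero_add, pow_one, Nat.cast_zero, div_one] at h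
  calc |log (1 - x) + x| = |x + log (1 - x)| := by rw [add_comm]
    _ ≤ |x| ^ 2 / (1 - |x|) := h
    _ ≤ 2 * x ^ 2 := by
      rw [div_le_iff₀ (by linarith), sq_abs]; nlinarith [sq_nonneg x]

theorem tendsto_one_sub_pow_mul_exp {q : ℕ → ℝ}
    (h : Tendsto (fun n : ℕ => n * q n ^ 2) atTop (𝓝 0)) :
    Tendsto (fun n : ℕ => (1 - q n) ^ n * exp (n * q n)) atTop (𝓝 1) := by
  have hsmall : ∀ᶠ n in atTop, |q n| ≤ 1 / 2 :=
    (tendsto_zero_iff_abs_tendsto_zero q).1 (tendsto_of_tendsto_natCast_mul_sq h)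
      |>.eventually_le_const (by norm_num)
  have hexponent : Tendsto (fun n : ℕ => n * (log (1 - q n) + q n)) atTop (𝓝 0) := by
    refine squeeze_zero_norm' ?_ (by simpa using h.const_mul 2)
    filter_upwards [hsmall] with n hn
    rw [norm_mul, Real.norm_natCast, norm_eq_abs]
    calc (n : ℝ) * |log (1 - q n) + q n| ≤ n * (2 * q n ^ 2) := by
          gcongr; exact abs_log_one_sub_add_le hn
      _ = 2 * (n * q n ^ 2) := by ring
  have hexp : Tendsto (fun n : ℕ => exp (n * (log (1 - q n) + q n))) atTop (𝓝 1) := by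
    simpa [Function.comp_def] using (continuous_exp.tendsto 0).comp hexponent
  refine hexp.congr' ?_
  filter_upwards [hsmall] with n hn
  have hpos : 0 < 1 - q n := by linarith [le_abs_self (q n)]
  rw [mul_add, exp_add, exp_nat_mul, exp_log hpos]

theorem tendsto_rpow_mul_one_sub_mul_log_div_pow (y : ℝ) :
    Tendsto (fun d : ℕ => (d : ℝ) ^ y * (1 - y * log d / d) ^ d) atTop (𝓝 1) := by
  have h : Tendsto (fun d : ℕ => d * (y * log d / d) ^ 2) atTop (𝓝 0) := by
    refine (tendsto_mul_log_pow_div_natCast (y ^ 2) 2).congr' ?_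
    filter_upwards [eventually_ne_atTop 0] with d hd
    field_simp
  refine (tendsto_one_sub_pow_mul_exp h).congr' ?_
  filter_upwards [eventually_ne_atTop 0] with d hd
  have hdpos : (0 : ℝ) < d := by positivity
  rw [mul_div_cancel₀ _ hdpos.ne', rpow_def_of_pos hdpos, mul_comm (log d), mul_comm]

theorem tendsto_one_sub_mul_log_div_pow_pred {y : ℝ} (hy : 0 < y) :
    Tendsto (fun d : ℕ => (1 - y * log d / d) ^ (d - 1)) atTop (𝓝 0) := by
  have hpow : Tendsto (fun d : ℕ => (1 - y * log d / d) ^ d) atTop (𝓝 0) := by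
    have := (tendsto_rpow_mul_one_sub_mul_log_div_pow y).mul
      ((tendsto_rpow_neg_atTop hy).comp tendsto_natCast_atTop_atTop)
    rw [one_mul] at this
    refine this.congr' ?_
    filter_upwards [eventually_ne_atTop 0] with d hd
    have hdpos : (0 : ℝ) < d := by positivity
    simp only [Function.comp_apply]
    rw [mul_right_comm, ← rpow_add hdpos, add_neg_cancel, rpow_zero, one_mul]
  have hbase : Tendsto (fun d : ℕ => 1 - y * log d / d) atTop (𝓝 1) := by
    simpa using (tendsto_mul_log_pow_div_natCast y 1).const_sub 1
  have := hpow.div hbase one_ne_zero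
  rw [zero_div] at this
  refine this.congr' ?_
  filter_upwards [hbase.eventually_ne one_ne_zero, eventually_ge_atTop 1] with d hne hd
  rw [Pi.div_apply, div_eq_iff hne, ← pow_succ, Nat.sub_add_cancel hd]

theorem fugacity_asymptotics_general (y : ℝ) (hy1 : 1 ≤ y) :
    Filter.Tendsto
      (fun d : ℕ =>
        ((y * Real.log d / d) *
            (1 - (1 - y * Real.log d / d) ^ (d - 1)) /
            (1 - y * Real.log d / d) ^ d) /
          ((d : ℝ) ^ (y - 1) * (y * Real.log d)))
      Filter.atTop (nhds 1) := by
  have hy : 0 < y := by linarith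
  have hlim := ((tendsto_one_sub_mul_log_div_pow_pred hy).const_sub 1).div
    (tendsto_rpow_mul_one_sub_mul_log_div_pow y) one_ne_zero
  rw [sub_zero, div_one] at hlim
  refine hlim.congr' ?_
  filter_upwards [eventually_ge_atTop 2] with d hd
  have hdpos : (0 : ℝ) < d := by positivity
  have hlog : log d ≠ 0 := (log_pos (by exact_mod_cast hd)).ne'
  rw [Pi.div_apply, rpow_sub hdpos, rpow_one]
  generalize (1 - y * log d / d) ^ (d - 1) = A
  generalize (1 - y * log d / d) ^ d = B
  field_simp

/-- For `q_d = y·(log d)/d` with `1 ≤ y ≤ 3` and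
`λ_d = q_d(1-(1-q_d)^{d-1})/(1-q_d)^d`, one has `λ_d ~ d^{y-1}·y·log d`. -/
theorem fugacity_asymptotics (y : ℝ) (hy1 : 1 ≤ y) (hy3 : y ≤ 3) :
    Filter.Tendsto
      (fun d : ℕ =>
        ((y * Real.log d / d) *
            (1 - (1 - y * Real.log d / d) ^ (d - 1)) /
            (1 - y * Real.log d / d) ^ d) /
          ((d : ℝ) ^ (y - 1) * (y * Real.log d)))
      Filter.atTop (nhds 1) :=
  fugacity_asymptotics_general y hy1
end

section
/- Fix an integer d ≥ 3 and define g(u) = (Σ_{j=2}^{d} j·C(d,j)·u^j) / (Σ_{j=2}^{d} C(d,j)·u^j) for u > 0, where C(d,j) is the binomial coefficient. Then g is strictly increasing on (0, ∞). -/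
open Finset

private lemma cross_le {a b : ℝ} (ha : 0 < a) (hab : a ≤ b) {j k : ℕ} (hkj : k ≤ j) :
    a ^ j * b ^ k ≤ b ^ j * a ^ k := by
  have hb : 0 < b := ha.trans_le hab
  have hj : j = k + (j - k) := (Nat.add_sub_cancel' hkj).symm
  rw [hj, pow_add, pow_add]
  have hpow : a ^ (j - k) ≤ b ^ (j - k) := pow_le_pow_left₀ ha.le hab _
  have h2 : a ^ k * b ^ k * a ^ (j - k) ≤ a ^ k * b ^ k * b ^ (j - k) :=
    mul_le_mul_of_nonneg_left hpow (by positivity)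
  nlinarith [h2]

/-- The conditioned-binomial mean ratio
`g(u) = (Σ_{j=2}^d j·C(d,j)·u^j)/(Σ_{j=2}^d C(d,j)·u^j)` is strictly increasing on `(0,∞)`. -/
theorem conditioned_binomial_mean_strictMono (d : ℕ) (hd : 3 ≤ d) :
    StrictMonoOn
      (fun u : ℝ =>
        (∑ j ∈ Finset.Icc 2 d, (j : ℝ) * (d.choose j) * u ^ j) /
          (∑ j ∈ Finset.Icc 2 d, (d.choose j : ℝ) * u ^ j))
      (Set.Ioi 0) := by
  intro a ha b hb hab
  simp only [Set.mem_Ioi] at ha hb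
  set s := Finset.Icc 2 d with hs
  set C : ℕ → ℝ := fun j => (d.choose j : ℝ) with hC
  -- denominators are positive
  have h2s : (2 : ℕ) ∈ s := by simp [hs]; omega
  have h3s : (3 : ℕ) ∈ s := by simp [hs]; omega
  have hC2 : 0 < C 2 := by
    simp only [hC]; exact_mod_cast Nat.choose_pos (by omega)
  have hC3 : 0 < C 3 := by
    simp only [hC]; exact_mod_cast Nat.choose_pos (by omega)
  have hD : ∀ u : ℝ, 0 < u → 0 < ∑ j ∈ s, C j * u ^ j := by
    intro u hu
    refine Finset.sum_pos' (fun j _ => ?_) ⟨2, h2s, mul_pos hC2 (pow_pos hu 2)⟩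
    exact mul_nonneg (by simp [hC]) (pow_nonneg hu.le j)
  have hDa := hD a ha
  have hDb := hD b hb
  simp only
  rw [div_lt_div_iff₀ hDa hDb]
  -- the key double sum
  have term_nonneg : ∀ j ∈ s, ∀ k ∈ s,
      0 ≤ ((j : ℝ) - k) * C j * C k * (b ^ j * a ^ k - a ^ j * b ^ k) := by
    intro j _ k _
    rcases le_total k j with hkj | hjk
    · refine mul_nonneg (mul_nonneg (mul_nonneg ?_ ?_) ?_) ?_
      · rw [sub_nonneg]; exact_mod_cast hkj
      · simp [hC]
      · simp [hC]
      · rw [sub_nonneg]; exact cross_le ha hab.le hkj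
    · rw [← neg_mul_neg]
      apply mul_nonneg <;> rw [neg_nonneg]
      · refine mul_nonpos_of_nonpos_of_nonneg (mul_nonpos_of_nonpos_of_nonneg ?_ ?_) ?_
        · rw [sub_nonpos]; exact_mod_cast hjk
        · simp [hC]
        · simp [hC]
      · rw [sub_nonpos]
        have := cross_le ha hab.le hjk
        nlinarith [this]
  have key : ∑ j ∈ s, ∑ k ∈ s, ((j : ℝ) - k) * C j * C k * (b ^ j * a ^ k - a ^ j * b ^ k)
      = 2 * ((∑ j ∈ s, (j : ℝ) * C j * b ^ j) * (∑ k ∈ s, C k * a ^ k)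
           - (∑ j ∈ s, (j : ℝ) * C j * a ^ j) * (∑ k ∈ s, C k * b ^ k)) := by
    have e1 : ∀ j k : ℕ, ((j : ℝ) - k) * C j * C k * (b ^ j * a ^ k - a ^ j * b ^ k)
        = ((j : ℝ) * C j * b ^ j) * (C k * a ^ k) - ((j : ℝ) * C j * a ^ j) * (C k * b ^ k)
          - (C j * b ^ j) * ((k : ℝ) * C k * a ^ k) + (C j * a ^ j) * ((k : ℝ) * C k * b ^ k) :=
      fun j k => by ring
    calc ∑ j ∈ s, ∑ k ∈ s, ((j : ℝ) - k) * C j * C k * (b ^ j * a ^ k - a ^ j * b ^ k)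
        = ∑ j ∈ s, ∑ k ∈ s,
            (((j : ℝ) * C j * b ^ j) * (C k * a ^ k) - ((j : ℝ) * C j * a ^ j) * (C k * b ^ k)
              - (C j * b ^ j) * ((k : ℝ) * C k * a ^ k)
              + (C j * a ^ j) * ((k : ℝ) * C k * b ^ k)) := by
          exact Finset.sum_congr rfl fun j _ => Finset.sum_congr rfl fun k _ => e1 j k
      _ = 2 * ((∑ j ∈ s, (j : ℝ) * C j * b ^ j) * (∑ k ∈ s, C k * a ^ k)
           - (∑ j ∈ s, (j : ℝ) * C j * a ^ j) * (∑ k ∈ s, C k * b ^ k)) := by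
          simp only [Finset.sum_add_distrib, Finset.sum_sub_distrib, ← Finset.mul_sum,
            ← Finset.sum_mul]
          ring
  have pos : 0 < ∑ j ∈ s, ∑ k ∈ s, ((j : ℝ) - k) * C j * C k * (b ^ j * a ^ k - a ^ j * b ^ k) := by
    refine Finset.sum_pos' (fun j hj => Finset.sum_nonneg (fun k hk => term_nonneg j hj k hk))
      ⟨3, h3s, Finset.sum_pos' (fun k hk => term_nonneg 3 h3s k hk) ⟨2, h2s, ?_⟩⟩
    have hfac : 0 < a ^ 2 * b ^ 2 * (b - a) := mul_pos (by positivity) (sub_pos.2 hab)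
    have h1 : (0 : ℝ) < b ^ 3 * a ^ 2 - a ^ 3 * b ^ 2 := by nlinarith [hfac]
    have : ((3 : ℕ) : ℝ) - ((2 : ℕ) : ℝ) = 1 := by norm_num
    rw [this]
    exact mul_pos (mul_pos (mul_pos one_pos hC3) hC2) h1
  linarith [key ▸ pos]
end

section
/- Let p and q be probability vectors on a finite set I with q_i > 0 for all i, and suppose |p_i/q_i - 1| ≤ 1/e for every i ∈ I. Then the relative entropy satisfies D(p‖q) = Σ_i p_i·log(p_i/q_i) ≤ 2·Σ_i |p_i - q_i|. -/
/-!
Termwise, with `x = p_i / q_i`, the bound `log x ≤ x - 1` gives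
`p_i log x ≤ (p_i - q_i) + q_i (x - 1)²`, and `|x - 1| ≤ 1` turns `q_i (x - 1)²` into at most
`|p_i - q_i|`. Summing, the terms `p_i - q_i` cancel, leaving `D(p‖q) ≤ ∑ |p_i - q_i|`.
-/

open Real

lemma mul_log_le_sub_one_add_abs {x : ℝ} (hx : 0 ≤ x) (hx1 : |x - 1| ≤ 1) :
    x * log x ≤ (x - 1) + |x - 1| := by
  have hlog : x * log x ≤ x * (x - 1) := by
    rcases hx.eq_or_lt with rfl | hpos
    · simp
    · exact mul_le_mul_of_nonneg_left (log_le_sub_one_of_pos hpos) hx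
  have hsq : (x - 1) ^ 2 ≤ |x - 1| := by
    rw [← sq_abs, sq]
    exact mul_le_of_le_one_left (abs_nonneg _) hx1
  nlinarith

lemma mul_log_div_le_sub_add_abs {p q : ℝ} (hq : 0 < q) (hclose : |p / q - 1| ≤ 1) :
    p * log (p / q) ≤ (p - q) + |p - q| := by
  have hx : 0 ≤ p / q := by linarith [neg_abs_le (p / q - 1)]
  have hp : p = q * (p / q) := by field_simp
  have hdiff : p - q = q * (p / q - 1) := by field_simp
  calc p * log (p / q) = q * (p / q * log (p / q)) := by rw [← mul_assoc, ← hp]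
    _ ≤ q * ((p / q - 1) + |p / q - 1|) :=
        mul_le_mul_of_nonneg_left (mul_log_le_sub_one_add_abs hx hclose) hq.le
    _ = (p - q) + |p - q| := by rw [hdiff, abs_mul, abs_of_pos hq]; ring

theorem relative_entropy_le_l1_general {I : Type*} [Fintype I] (p q : I → ℝ)
    (hq : ∀ i, 0 < q i)
    (hp1 : ∑ i, p i = 1) (hq1 : ∑ i, q i = 1)
    (hclose : ∀ i, |p i / q i - 1| ≤ (Real.exp 1)⁻¹) :
    ∑ i, p i * Real.log (p i / q i) ≤ 2 * ∑ i, |p i - q i| := by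
  have he : (exp 1)⁻¹ ≤ 1 := inv_le_one_of_one_le₀ (one_le_exp zero_le_one)
  have hl1 : 0 ≤ ∑ i, |p i - q i| := Finset.sum_nonneg fun i _ => abs_nonneg _
  calc ∑ i, p i * log (p i / q i)
      ≤ ∑ i, ((p i - q i) + |p i - q i|) :=
        Finset.sum_le_sum fun i _ => mul_log_div_le_sub_add_abs (hq i) ((hclose i).trans he)
    _ = ∑ i, |p i - q i| := by
        rw [Finset.sum_add_distrib, Finset.sum_sub_distrib, hp1, hq1, sub_self, zero_add]
    _ ≤ 2 * ∑ i, |p i - q i| := by linarith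

/-- If `p`, `q` are probability vectors on a finite set with `q` strictly positive and
`|p_i/q_i - 1| ≤ 1/e` for all `i`, then `D(p‖q) ≤ 2·Σ_i |p_i - q_i|`. -/
theorem relative_entropy_le_l1 {I : Type*} [Fintype I] (p q : I → ℝ)
    (hp : ∀ i, 0 ≤ p i) (hq : ∀ i, 0 < q i)
    (hp1 : ∑ i, p i = 1) (hq1 : ∑ i, q i = 1)
    (hclose : ∀ i, |p i / q i - 1| ≤ (Real.exp 1)⁻¹) :
    ∑ i, p i * Real.log (p i / q i) ≤ 2 * ∑ i, |p i - q i| :=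
  relative_entropy_le_l1_general p q hq hp1 hq1 hclose
end

section
/- Fix an integer d ≥ 2 and a real λ > 1, and let q ∈ (0,1) be the unique solution of q = λ(1-q)^{d-1}/((λ-1)(1-q)^{d-1}+1). Define α(λ) = q·(1 + (d/2 - 1)·(1-q)^{d-1}) / (1 + q - (1-q)^{d-1}) and Φ(λ) = -log[1 - q(1 - 1/λ)] - (d/2 - 1)·log[1 - q²(1 - 1/λ)] - α(λ)·log λ. Then, viewing Φ and α as smooth functions of λ, one has dΦ/dλ = -(log λ)·(dα/dλ); equivalently, on any interval of λ where α is strictly monotone, the composite map α ↦ Φ is differentiable with derivative -log λ. -/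
/-!
Parametrize everything by `s = q(λ)` instead of `λ`. Writing `p = (1 - s)^(d-1)`, the fixed-point
equation inverts to `λ = Λ(s) := s(1 - p)/(1 - s)^d` (`fugacity`), and `α` depends on `s` alone
(`intensity`). Substituting `λ = Λ(s)` turns the two logarithms of `Φ` (together `Ψ(s)`,
`freeEnergy`) into `log((1 - s)/(1 - p))` and `log((1 - s)(1 + s - p)/(1 - p))`, so `Ψ` is a
combination of `log(1 - s)`, `log(1 - p)`, `log(1 + s - p)`. A rational identity in `s` and `p`
gives `Ψ' = α (log Λ)'`, whence `Φ = Ψ - α log Λ` has `Φ' = -log Λ · α'` in the variable `s`;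
the chain rule through `q` carries this back to `λ`.
-/

open Real Set

theorem hasDerivAt_sub_mul_of_hasDerivAt_eq_mul {Ψ α L : ℝ → ℝ} {α' L' x : ℝ}
    (hΨ : HasDerivAt Ψ (α x * L') x) (hα : HasDerivAt α α' x) (hL : HasDerivAt L L' x) :
    HasDerivAt (fun y => Ψ y - α y * L y) (-L x * α') x :=
  (hΨ.fun_sub (hα.fun_mul hL)).congr_deriv (by ring)

theorem hasDerivAt_one_sub_pow (n : ℕ) {s : ℝ} (hs : s ≠ 1) :
    HasDerivAt (fun s : ℝ => (1 - s) ^ n) (-(n * (1 - s) ^ n / (1 - s))) s := by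
  refine (((hasDerivAt_id s).const_sub 1).fun_pow n).congr_deriv ?_
  have h1s : 1 - s ≠ 0 := sub_ne_zero.mpr hs.symm
  rcases n with _ | n
  · simp
  · rw [pow_succ, Nat.add_sub_cancel]
    field_simp
    simp

namespace FrozenModel

variable (d : ℕ)

noncomputable def fugacity (s : ℝ) : ℝ :=
  s * (1 - (1 - s) ^ (d - 1)) / (1 - s) ^ d

noncomputable def intensity (s : ℝ) : ℝ :=
  s * (1 + ((d : ℝ) / 2 - 1) * (1 - s) ^ (d - 1)) / (1 + s - (1 - s) ^ (d - 1))

noncomputable def freeEnergy (s : ℝ) : ℝ :=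
  -log (1 - s * (1 - 1 / fugacity d s))
    - ((d : ℝ) / 2 - 1) * log (1 - s ^ 2 * (1 - 1 / fugacity d s))

noncomputable def exponent (s : ℝ) : ℝ :=
  freeEnergy d s - intensity d s * log (fugacity d s)

variable {d} {s : ℝ}

theorem fugacity_eq_of_isFixedPt (hd : 1 ≤ d) {t : ℝ} (ht : 1 < t) (hs : s ∈ Ioo 0 1)
    (hfix : s = t * (1 - s) ^ (d - 1) / ((t - 1) * (1 - s) ^ (d - 1) + 1)) :
    fugacity d s = t := by
  have hp : 0 < (1 - s) ^ (d - 1) := pow_pos (by linarith [hs.2]) _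
  have hden : 0 < (t - 1) * (1 - s) ^ (d - 1) + 1 := by nlinarith
  have hsucc : (1 - s) ^ d = (1 - s) * (1 - s) ^ (d - 1) := by
    rw [← pow_succ', Nat.sub_add_cancel hd]
  rw [eq_div_iff hden.ne'] at hfix
  rw [fugacity, hsucc, div_eq_iff (mul_pos (by linarith [hs.2]) hp).ne']
  linear_combination hfix

theorem one_sub_pow_pred_lt_one (hd : 2 ≤ d) (hs : s ∈ Ioo 0 1) : (1 - s) ^ (d - 1) < 1 :=
  pow_lt_one₀ (by linarith [hs.2]) (by linarith [hs.1]) (by omega)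

theorem log_fugacity_eq (hd : 2 ≤ d) (hs : s ∈ Ioo 0 1) :
    log (fugacity d s) = log s + log (1 - (1 - s) ^ (d - 1)) - d * log (1 - s) := by
  have h1p : 0 < 1 - (1 - s) ^ (d - 1) := by linarith [one_sub_pow_pred_lt_one hd hs]
  have h1s : 0 < 1 - s := by linarith [hs.2]
  rw [fugacity, log_div (mul_pos hs.1 h1p).ne' (by positivity), log_mul hs.1.ne' h1p.ne', log_pow]

theorem freeEnergy_eq (hd : 2 ≤ d) (hs : s ∈ Ioo 0 1) :
    freeEnergy d s = (d / 2) * (log (1 - (1 - s) ^ (d - 1)) - log (1 - s))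
      - ((d : ℝ) / 2 - 1) * log (1 + s - (1 - s) ^ (d - 1)) := by
  have h1p : 0 < 1 - (1 - s) ^ (d - 1) := by linarith [one_sub_pow_pred_lt_one hd hs]
  have h1s : 0 < 1 - s := by linarith [hs.2]
  have hsp : 0 < 1 + s - (1 - s) ^ (d - 1) := by linarith [hs.1]
  have hs0 : s ≠ 0 := hs.1.ne'
  have hpow : (1 - s) ^ d = (1 - s) * (1 - s) ^ (d - 1) := by
    rw [← pow_succ', Nat.sub_add_cancel (by omega)]
  have hinv : 1 / fugacity d s = (1 - s) * (1 - s) ^ (d - 1) / (s * (1 - (1 - s) ^ (d - 1))) := by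
    rw [fugacity, one_div_div, hpow]
  have h1 : 1 - s * (1 - 1 / fugacity d s) = (1 - s) / (1 - (1 - s) ^ (d - 1)) := by
    rw [hinv]; field_simp; ring
  have h2 : 1 - s ^ 2 * (1 - 1 / fugacity d s)
      = (1 - s) * (1 + s - (1 - s) ^ (d - 1)) / (1 - (1 - s) ^ (d - 1)) := by
    rw [hinv]; field_simp; ring
  rw [freeEnergy, h1, h2, log_div h1s.ne' h1p.ne', log_div (by positivity) h1p.ne',
    log_mul h1s.ne' hsp.ne']
  ring

theorem hasDerivAt_log_fugacity (hd : 2 ≤ d) (hs : s ∈ Ioo 0 1) :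
    HasDerivAt (fun s => log (fugacity d s))
      (1 / s + (d - 1) * (1 - s) ^ (d - 1) / ((1 - s) * (1 - (1 - s) ^ (d - 1)))
        + d / (1 - s)) s := by
  have h1p : 0 < 1 - (1 - s) ^ (d - 1) := by linarith [one_sub_pow_pred_lt_one hd hs]
  have h1s : 0 < 1 - s := by linarith [hs.2]
  have hformula := ((hasDerivAt_log hs.1.ne').add
    (((hasDerivAt_one_sub_pow (d - 1) (by linarith [hs.2])).const_sub 1).log h1p.ne')).sub
    ((((hasDerivAt_id' s).const_sub 1).log h1s.ne').const_mul (d : ℝ))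
  refine (hformula.congr_of_eventuallyEq ?_).congr_deriv ?_
  · filter_upwards [Ioo_mem_nhds hs.1 hs.2] with x hx using log_fugacity_eq hd hx
  · have hs0 : s ≠ 0 := hs.1.ne'
    rw [Nat.cast_pred (by omega)]
    field_simp
    ring

theorem hasDerivAt_freeEnergy (hd : 2 ≤ d) (hs : s ∈ Ioo 0 1) :
    HasDerivAt (freeEnergy d) (intensity d s * deriv (fun s => log (fugacity d s)) s) s := by
  have h1p : 0 < 1 - (1 - s) ^ (d - 1) := by linarith [one_sub_pow_pred_lt_one hd hs]
  have h1s : 0 < 1 - s := by linarith [hs.2]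
  have hsp : 0 < 1 + s - (1 - s) ^ (d - 1) := by linarith [hs.1]
  have hp := hasDerivAt_one_sub_pow (d - 1) (by linarith [hs.2] : s ≠ 1)
  have hformula := ((((hp.const_sub 1).log h1p.ne').sub
    (((hasDerivAt_id' s).const_sub 1).log h1s.ne')).const_mul ((d : ℝ) / 2)).sub
    ((((hasDerivAt_id' s).const_add 1).fun_sub hp |>.log hsp.ne').const_mul ((d : ℝ) / 2 - 1))
  refine (hformula.congr_of_eventuallyEq ?_).congr_deriv ?_
  · filter_upwards [Ioo_mem_nhds hs.1 hs.2] with x hx using freeEnergy_eq hd hx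
  · have hs0 : s ≠ 0 := hs.1.ne'
    rw [(hasDerivAt_log_fugacity hd hs).deriv, intensity, Nat.cast_pred (by omega)]
    generalize (1 - s) ^ (d - 1) = p at *
    field_simp
    ring

theorem differentiableAt_intensity (hd : 2 ≤ d) (hs : s ∈ Ioo 0 1) :
    DifferentiableAt ℝ (intensity d) s := by
  have hsp : 1 + s - (1 - s) ^ (d - 1) ≠ 0 := by
    linarith [hs.1, one_sub_pow_pred_lt_one hd hs]
  unfold intensity
  fun_prop (disch := exact hsp)

theorem hasDerivAt_exponent (hd : 2 ≤ d) (hs : s ∈ Ioo 0 1) :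
    HasDerivAt (exponent d) (-log (fugacity d s) * deriv (intensity d) s) s :=
  hasDerivAt_sub_mul_of_hasDerivAt_eq_mul (hasDerivAt_freeEnergy hd hs)
    (differentiableAt_intensity hd hs).hasDerivAt
    (hasDerivAt_log_fugacity hd hs).differentiableAt.hasDerivAt

end FrozenModel

open FrozenModel

/-- Along the frozen-model fixed point `q(λ)`, with
`α(λ) = q(1+(d/2-1)(1-q)^{d-1})/(1+q-(1-q)^{d-1})` and
`Φ(λ) = -log[1-q(1-1/λ)] - (d/2-1)log[1-q²(1-1/λ)] - α(λ)·log λ`, one has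
`dΦ/dλ = -(log λ)·(dα/dλ)`: the fugacity `λ` is the Lagrange multiplier conjugate
to the intensity `α`. -/
theorem frozen_exponent_lagrange (d : ℕ) (hd : 2 ≤ d) (q : ℝ → ℝ)
    (hdiff : DifferentiableOn ℝ q (Set.Ioi 1))
    (hq : ∀ lam ∈ Set.Ioi (1 : ℝ), q lam ∈ Set.Ioo (0 : ℝ) 1 ∧
      q lam = lam * (1 - q lam) ^ (d - 1) /
        ((lam - 1) * (1 - q lam) ^ (d - 1) + 1)) :
    ∀ lam ∈ Set.Ioi (1 : ℝ),
      deriv (fun t : ℝ =>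
          -Real.log (1 - q t * (1 - 1 / t))
            - ((d : ℝ) / 2 - 1) * Real.log (1 - (q t) ^ 2 * (1 - 1 / t))
            - (q t * (1 + ((d : ℝ) / 2 - 1) * (1 - q t) ^ (d - 1)) /
                (1 + q t - (1 - q t) ^ (d - 1))) * Real.log t) lam
        = -Real.log lam *
            deriv (fun t : ℝ =>
              q t * (1 + ((d : ℝ) / 2 - 1) * (1 - q t) ^ (d - 1)) /
                (1 + q t - (1 - q t) ^ (d - 1))) lam := by
  intro lam hlam
  have hfug : ∀ t ∈ Ioi (1 : ℝ), fugacity d (q t) = t := fun t ht =>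
    fugacity_eq_of_isFixedPt (by omega) ht (hq t ht).1 (hq t ht).2
  have hqd : HasDerivAt q (deriv q lam) lam :=
    (hdiff.differentiableAt (Ioi_mem_nhds hlam)).hasDerivAt
  have hqlam := (hq lam hlam).1
  refine (Filter.EventuallyEq.deriv_eq (f := exponent d ∘ q) ?_).trans ?_
  · filter_upwards [Ioi_mem_nhds hlam] with t ht
    simp only [Function.comp, exponent, freeEnergy, hfug t ht]
    rfl
  · change _ = -log lam * deriv (intensity d ∘ q) lam
    rw [((hasDerivAt_exponent hd hqlam).comp lam hqd).deriv,
      ((differentiableAt_intensity hd hqlam).hasDerivAt.comp lam hqd).deriv, hfug lam hlam]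
    ring
end

section
/- Let (X_t)_{t≥0} be a random walk on ℤ² whose i.i.d. increments take value (1,0) with probability θ₁, (0,1) with probability θ₂, and (0,0) otherwise, and let τ = inf{ t ≥ 0 : X_{t,1} ≥ r and X_{t,2} ≥ r } for a fixed integer r ≥ 1. Then for every d ≥ 1 with P(τ ≤ d) > 0, E[X_{d,1} | τ ≤ d] ≤ r + d·θ₁. -/
open Finset

lemma rank_injOn {α : Type*} [LinearOrder α] (Z : Finset α) :
    Set.InjOn (fun t => (Z.filter (· < t)).card) Z := by
  intro a ha b hb hab
  by_contra hne
  wlog h : a < b generalizing a b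
  · exact this hb ha hab.symm (Ne.symm hne) (lt_of_le_of_ne (not_lt.1 h) (Ne.symm hne))
  · have hss : Z.filter (· < a) ⊂ Z.filter (· < b) := by
      refine Finset.ssubset_iff_of_subset ?_ |>.2 ?_
      · intro x hx
        exact Finset.mem_filter.2 ⟨(Finset.mem_filter.1 hx).1,
          lt_trans (Finset.mem_filter.1 hx).2 h⟩
      · exact ⟨a, Finset.mem_filter.2 ⟨ha, h⟩, fun hc => absurd (Finset.mem_filter.1 hc).2 (lt_irrefl a)⟩
    exact absurd hab (Nat.ne_of_lt (Finset.card_lt_card hss))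

lemma rank_image {α : Type*} [LinearOrder α] (Z : Finset α) :
    Z.image (fun t => (Z.filter (· < t)).card) = Finset.range Z.card := by
  apply Finset.eq_of_subset_of_card_le
  · intro k hk
    obtain ⟨t, ht, rfl⟩ := Finset.mem_image.1 hk
    refine Finset.mem_range.2 (Finset.card_lt_card ?_)
    refine Finset.ssubset_iff_of_subset (Finset.filter_subset _ _) |>.2 ⟨t, ht, ?_⟩
    intro hc; exact absurd (Finset.mem_filter.1 hc).2 (lt_irrefl t)
  · rw [Finset.card_range, Finset.card_image_of_injOn (rank_injOn Z)]

lemma count_extra {α : Type*} [LinearOrder α] (Z : Finset α) (r : ℕ) :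
    (Z.filter (fun t => r ≤ (Z.filter (· < t)).card)).card = Z.card - r := by
  have h1 : (Z.filter (fun t => r ≤ (Z.filter (· < t)).card)).card
      = ((Z.filter (fun t => r ≤ (Z.filter (· < t)).card)).image
          (fun t => (Z.filter (· < t)).card)).card := by
    rw [Finset.card_image_of_injOn ((rank_injOn Z).mono (by
      intro x hx; exact Finset.mem_coe.2 (Finset.filter_subset _ _ (Finset.mem_coe.1 hx))))]
  rw [h1, ← Finset.filter_image, rank_image]
  have : (Finset.range Z.card).filter (fun k => r ≤ k) = Finset.Ico r Z.card := by
    ext k; simp [Finset.mem_Ico]; omega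
  rw [this, Nat.card_Ico]

lemma slice_sum {d : ℕ} (t : Fin d) (g : (Fin d → Fin 3) → ℝ) :
    ∑ ω, g ω = ∑ ω ∈ univ.filter (fun ω : Fin d → Fin 3 => ω t = 0),
      ∑ v, g (Function.update ω t v) := by
  have slice : ∀ v : Fin 3, ∑ ω ∈ univ.filter (fun ω : Fin d → Fin 3 => ω t = v), g ω
      = ∑ ω ∈ univ.filter (fun ω : Fin d → Fin 3 => ω t = 0), g (Function.update ω t v) := by
    intro v
    refine Finset.sum_nbij' (fun ω => Function.update ω t 0)
      (fun ω => Function.update ω t v) ?_ ?_ ?_ ?_ ?_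
    · intro ω hω; simp [Function.update_self]
    · intro ω hω; simp [Function.update_self]
    · intro ω hω
      simp only [Function.update_idem]
      rw [← (Finset.mem_filter.1 hω).2, Function.update_eq_self]
    · intro ω hω
      simp only [Function.update_idem]
      rw [← (Finset.mem_filter.1 hω).2, Function.update_eq_self]
    · intro ω hω
      congr 1
      simp only [Function.update_idem]
      rw [← (Finset.mem_filter.1 hω).2, Function.update_eq_self]
  rw [← Finset.sum_fiberwise univ (fun ω : Fin d → Fin 3 => ω t) g]
  rw [Finset.sum_congr rfl (fun v _ => slice v), ← Finset.sum_comm]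

lemma core {d : ℕ} (t : Fin d) (f : Fin 3 → ℝ) (hf : ∀ v, 0 ≤ f v)
    (hsum : ∑ v, f v = 1) (P : (Fin d → Fin 3) → Prop) [DecidablePred P]
    (hP : ∀ ω v, P (Function.update ω t 0) → P (Function.update ω t v)) :
    ∑ ω ∈ univ.filter (fun ω => P ω ∧ ω t = 0), ∏ s, f (ω s)
      ≤ f 0 * ∑ ω ∈ univ.filter P, ∏ s, f (ω s) := by
  have prod_split : ∀ (ω : Fin d → Fin 3) (v : Fin 3),
      ∏ s, f (Function.update ω t v s) = f v * ∏ s ∈ univ.erase t, f (ω s) := by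
    intro ω v
    rw [← Finset.mul_prod_erase univ _ (Finset.mem_univ t), Function.update_self]
    congr 1
    exact Finset.prod_congr rfl fun s hs =>
      congrArg f (Function.update_of_ne (Finset.mem_erase.1 hs).1 _ _)
  have hR : ∀ ω : Fin d → Fin 3, 0 ≤ ∏ s ∈ univ.erase t, f (ω s) :=
    fun ω => Finset.prod_nonneg fun s _ => hf _
  have filter_eq : univ.filter (fun ω : Fin d → Fin 3 => P ω ∧ ω t = 0)
      = (univ.filter (fun ω : Fin d → Fin 3 => ω t = 0)).filter P := by
    rw [Finset.filter_filter]
    exact Finset.filter_congr fun ω _ => and_comm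
  have hLHS : ∑ ω ∈ univ.filter (fun ω => P ω ∧ ω t = 0), ∏ s, f (ω s)
      = f 0 * ∑ ω ∈ univ.filter (fun ω : Fin d → Fin 3 => ω t = 0),
          (if P ω then ∏ s ∈ univ.erase t, f (ω s) else 0) := by
    rw [Finset.mul_sum, filter_eq, Finset.sum_filter]
    refine Finset.sum_congr rfl fun ω hω => ?_
    have hω0 : ω t = 0 := (Finset.mem_filter.1 hω).2
    split
    · rw [← Finset.mul_prod_erase univ _ (Finset.mem_univ t), hω0]
    · rw [mul_zero]
  rw [hLHS, Finset.sum_filter (p := P)]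
  apply mul_le_mul_of_nonneg_left _ (hf 0)
  rw [slice_sum t (fun ω => if P ω then ∏ s, f (ω s) else 0)]
  apply Finset.sum_le_sum
  intro ω hω
  have hω0 : ω t = 0 := (Finset.mem_filter.1 hω).2
  by_cases hPω : P ω
  · rw [if_pos hPω]
    have hup : ∀ v, P (Function.update ω t v) := by
      intro v
      apply hP
      rwa [← hω0, Function.update_eq_self]
    calc ∏ s ∈ univ.erase t, f (ω s)
        = ∑ v, f v * ∏ s ∈ univ.erase t, f (ω s) := by
          rw [← Finset.sum_mul, hsum, one_mul]
      _ ≤ ∑ v, (if P (Function.update ω t v) then ∏ s, f (Function.update ω t v s) else 0) := by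
          refine Finset.sum_le_sum fun v _ => ?_
          rw [if_pos (hup v), prod_split]
  · rw [if_neg hPω]
    refine Finset.sum_nonneg fun v _ => ?_
    split
    · exact Finset.prod_nonneg fun s _ => hf _
    · exact le_refl 0


/-- For the random walk on `ℤ²` whose i.i.d. increments are `(1,0)` w.p. `θ₁`,
`(0,1)` w.p. `θ₂` and `(0,0)` otherwise, and
`τ = inf{t : X_{t,1} ≥ r and X_{t,2} ≥ r}`, one has
`E[X_{d,1} | τ ≤ d] ≤ r + d·θ₁`. The walk up to time `d` is encoded by
`ω : Fin d → Fin 3` (value `0` = increment `(1,0)`, `1` = increment `(0,1)`),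
with weight `∏_t θ(ω t)`; the event `{τ ≤ d}` is exactly
`{X_{d,1} ≥ r and X_{d,2} ≥ r}`. -/
theorem two_dim_walk_conditional_mean (d r : ℕ) (hd : 1 ≤ d) (hr : 1 ≤ r)
    (θ₁ θ₂ : ℝ) (h1 : 0 ≤ θ₁) (h2 : 0 ≤ θ₂) (h12 : θ₁ + θ₂ ≤ 1)
    (hpos : 0 <
      ∑ ω ∈ Finset.univ.filter (fun ω : Fin d → Fin 3 =>
          r ≤ (Finset.univ.filter fun t => ω t = 0).card ∧
          r ≤ (Finset.univ.filter fun t => ω t = 1).card),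
        ∏ t, ![θ₁, θ₂, 1 - θ₁ - θ₂] (ω t)) :
    (∑ ω ∈ Finset.univ.filter (fun ω : Fin d → Fin 3 =>
          r ≤ (Finset.univ.filter fun t => ω t = 0).card ∧
          r ≤ (Finset.univ.filter fun t => ω t = 1).card),
        ((Finset.univ.filter fun t => ω t = 0).card : ℝ) *
          ∏ t, ![θ₁, θ₂, 1 - θ₁ - θ₂] (ω t)) /
      (∑ ω ∈ Finset.univ.filter (fun ω : Fin d → Fin 3 =>
          r ≤ (Finset.univ.filter fun t => ω t = 0).card ∧
          r ≤ (Finset.univ.filter fun t => ω t = 1).card),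
        ∏ t, ![θ₁, θ₂, 1 - θ₁ - θ₂] (ω t))
      ≤ r + d * θ₁ := by
  have hf : ∀ v : Fin 3, 0 ≤ ![θ₁, θ₂, 1 - θ₁ - θ₂] v := by
    intro v
    fin_cases v <;> simp <;> linarith
  have hsum : ∑ v, ![θ₁, θ₂, 1 - θ₁ - θ₂] v = 1 := by
    rw [Fin.sum_univ_three]
    show θ₁ + θ₂ + (1 - θ₁ - θ₂) = 1
    ring
  set A := Finset.univ.filter (fun ω : Fin d → Fin 3 =>
      r ≤ (Finset.univ.filter fun t => ω t = 0).card ∧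
      r ≤ (Finset.univ.filter fun t => ω t = 1).card) with hA
  have hwnn : ∀ ω : Fin d → Fin 3, 0 ≤ ∏ t, ![θ₁, θ₂, 1 - θ₁ - θ₂] (ω t) :=
    fun ω => Finset.prod_nonneg fun t _ => hf _
  rw [div_le_iff₀ hpos]
  -- Per-time key bound
  have hsub : ∀ (t : Fin d) (ω : Fin d → Fin 3),
      r ≤ (univ.filter fun u => ω u = 0 ∧ u < t).card →
      r ≤ (univ.filter fun u => ω u = 0).card := by
    intro t ω h
    exact le_trans h (Finset.card_le_card (fun u hu =>
      Finset.mem_filter.2 ⟨Finset.mem_univ u, (Finset.mem_filter.1 hu).2.1⟩))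
  have key : ∀ t : Fin d,
      ∑ ω ∈ A.filter (fun ω => ω t = 0 ∧ r ≤ (univ.filter fun u => ω u = 0 ∧ u < t).card),
        ∏ s, ![θ₁, θ₂, 1 - θ₁ - θ₂] (ω s)
      ≤ θ₁ * ∑ ω ∈ A, ∏ s, ![θ₁, θ₂, 1 - θ₁ - θ₂] (ω s) := by
    intro t
    have hPupd : ∀ (ω : Fin d → Fin 3) (v : Fin 3),
        (fun ω : Fin d → Fin 3 => r ≤ (univ.filter fun u => ω u = 1).card ∧
          r ≤ (univ.filter fun u => ω u = 0 ∧ u < t).card) (Function.update ω t 0) →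
        (fun ω : Fin d → Fin 3 => r ≤ (univ.filter fun u => ω u = 1).card ∧
          r ≤ (univ.filter fun u => ω u = 0 ∧ u < t).card) (Function.update ω t v) := by
      rintro ω v ⟨hc1, hc2⟩
      have heq : ∀ v' : Fin 3,
          (univ.filter fun u => Function.update ω t v' u = 0 ∧ u < t)
            = (univ.filter fun u => ω u = 0 ∧ u < t) := by
        intro v'
        refine Finset.filter_congr fun u _ => ?_
        by_cases hut : u = t
        · subst hut; simp [lt_irrefl]
        · rw [Function.update_of_ne hut]
      constructor
      · refine le_trans hc1 (Finset.card_le_card ?_)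
        intro u hu
        rcases Finset.mem_filter.1 hu with ⟨_, hu1⟩
        by_cases hut : u = t
        · subst hut
          rw [Function.update_self] at hu1
          exact absurd hu1 (by decide)
        · rw [Function.update_of_ne hut] at hu1
          exact Finset.mem_filter.2 ⟨Finset.mem_univ u,
            by rw [Function.update_of_ne hut]; exact hu1⟩
      · rw [heq v]; rw [heq 0] at hc2; exact hc2
    have hcore := core t (![θ₁, θ₂, 1 - θ₁ - θ₂]) hf hsum
      (fun ω : Fin d → Fin 3 => r ≤ (univ.filter fun u => ω u = 1).card ∧
        r ≤ (univ.filter fun u => ω u = 0 ∧ u < t).card) hPupd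
    have hfil : A.filter (fun ω => ω t = 0 ∧ r ≤ (univ.filter fun u => ω u = 0 ∧ u < t).card)
        = univ.filter (fun ω : Fin d → Fin 3 =>
            (r ≤ (univ.filter fun u => ω u = 1).card ∧
             r ≤ (univ.filter fun u => ω u = 0 ∧ u < t).card) ∧ ω t = 0) := by
      rw [hA, Finset.filter_filter]
      refine Finset.filter_congr fun ω _ => ?_
      constructor
      · rintro ⟨⟨h0, hc1⟩, h2, h3⟩; exact ⟨⟨hc1, h3⟩, h2⟩
      · rintro ⟨⟨hc1, h3⟩, h2⟩; exact ⟨⟨hsub t ω h3, hc1⟩, h2, h3⟩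
    rw [hfil]
    refine le_trans hcore ?_
    have hf0 : (![θ₁, θ₂, 1 - θ₁ - θ₂] : Fin 3 → ℝ) 0 = θ₁ := rfl
    rw [hf0]
    apply mul_le_mul_of_nonneg_left _ h1
    apply Finset.sum_le_sum_of_subset_of_nonneg
    · intro ω hω
      rcases Finset.mem_filter.1 hω with ⟨_, hc1, hc2⟩
      rw [hA]
      exact Finset.mem_filter.2 ⟨Finset.mem_univ ω, hsub t ω hc2, hc1⟩
    · intro ω _ _; exact hwnn ω
  -- counting identity
  have hcast : ∀ ω ∈ A, ((univ.filter fun t => ω t = 0).card : ℝ)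
      = r + ((univ.filter (fun t : Fin d => ω t = 0 ∧
          r ≤ (univ.filter fun u => ω u = 0 ∧ u < t).card)).card : ℝ) := by
    intro ω hω
    have hrN : r ≤ (univ.filter fun t => ω t = 0).card := by
      rw [hA] at hω
      exact (Finset.mem_filter.1 hω).2.1
    have hE := count_extra (univ.filter fun t : Fin d => ω t = 0) r
    simp only [Finset.filter_filter] at hE
    rw [hE, Nat.cast_sub hrN]
    ring
  -- assemble
  calc ∑ ω ∈ A, ((univ.filter fun t => ω t = 0).card : ℝ) * ∏ s, ![θ₁, θ₂, 1 - θ₁ - θ₂] (ω s)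
      = ∑ ω ∈ A, ((r : ℝ) * ∏ s, ![θ₁, θ₂, 1 - θ₁ - θ₂] (ω s)
          + ((univ.filter (fun t : Fin d => ω t = 0 ∧
              r ≤ (univ.filter fun u => ω u = 0 ∧ u < t).card)).card : ℝ)
            * ∏ s, ![θ₁, θ₂, 1 - θ₁ - θ₂] (ω s)) := by
        refine Finset.sum_congr rfl fun ω hω => ?_
        rw [hcast ω hω]; ring
    _ = (r : ℝ) * ∑ ω ∈ A, ∏ s, ![θ₁, θ₂, 1 - θ₁ - θ₂] (ω s)
        + ∑ ω ∈ A, ((univ.filter (fun t : Fin d => ω t = 0 ∧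
            r ≤ (univ.filter fun u => ω u = 0 ∧ u < t).card)).card : ℝ)
          * ∏ s, ![θ₁, θ₂, 1 - θ₁ - θ₂] (ω s) := by
        rw [Finset.sum_add_distrib, Finset.mul_sum]
    _ ≤ (r : ℝ) * ∑ ω ∈ A, ∏ s, ![θ₁, θ₂, 1 - θ₁ - θ₂] (ω s)
        + (d : ℝ) * θ₁ * ∑ ω ∈ A, ∏ s, ![θ₁, θ₂, 1 - θ₁ - θ₂] (ω s) := by
        gcongr ?_ + ?_
        · exact le_refl _
        · calc ∑ ω ∈ A, ((univ.filter (fun t : Fin d => ω t = 0 ∧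
                r ≤ (univ.filter fun u => ω u = 0 ∧ u < t).card)).card : ℝ)
              * ∏ s, ![θ₁, θ₂, 1 - θ₁ - θ₂] (ω s)
              = ∑ ω ∈ A, ∑ t : Fin d, (if ω t = 0 ∧
                  r ≤ (univ.filter fun u => ω u = 0 ∧ u < t).card then
                    ∏ s, ![θ₁, θ₂, 1 - θ₁ - θ₂] (ω s) else 0) := by
                refine Finset.sum_congr rfl fun ω _ => ?_
                rw [Finset.card_filter]
                push_cast
                rw [Finset.sum_mul]
                refine Finset.sum_congr rfl fun t _ => ?_
                split <;> simp
            _ = ∑ t : Fin d, ∑ ω ∈ A, (if ω t = 0 ∧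
                  r ≤ (univ.filter fun u => ω u = 0 ∧ u < t).card then
                    ∏ s, ![θ₁, θ₂, 1 - θ₁ - θ₂] (ω s) else 0) := Finset.sum_comm
            _ = ∑ t : Fin d, ∑ ω ∈ A.filter (fun ω => ω t = 0 ∧
                  r ≤ (univ.filter fun u => ω u = 0 ∧ u < t).card),
                    ∏ s, ![θ₁, θ₂, 1 - θ₁ - θ₂] (ω s) := by
                exact Finset.sum_congr rfl fun t _ => (Finset.sum_filter _ _).symm
            _ ≤ ∑ t : Fin d, θ₁ * ∑ ω ∈ A, ∏ s, ![θ₁, θ₂, 1 - θ₁ - θ₂] (ω s) :=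
                Finset.sum_le_sum fun t _ => key t
            _ = (d : ℝ) * θ₁ * ∑ ω ∈ A, ∏ s, ![θ₁, θ₂, 1 - θ₁ - θ₂] (ω s) := by
                rw [Finset.sum_const, Finset.card_univ, Fintype.card_fin, nsmul_eq_mul]
                ring
    _ = ((r : ℝ) + d * θ₁) * ∑ ω ∈ A, ∏ s, ![θ₁, θ₂, 1 - θ₁ - θ₂] (ω s) := by ring
end
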